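/- arXiv:2605.06953 — 5 statements merged into one kernel-verified Lean document; each statement's English description precedes it below -/
import Mathlib

section
/- For a fixed positive integer s ≥ 2, H_n/(H_n − H_{n−s}) = (n/s)·H_n − ((s−1)/(2s))·H_n + o(1) as n → ∞, where H_n is the n-th harmonic number. -/
/-!
Write `D = H_n - H_{n-s} = ∑_{j<s} 1/(n - j)` and `c = n/s - (s-1)/(2s)`, so that the error term
is `H_n (1 - c D) / D`. Expanding `(n - (s-1)/2)/(n - j) = 1 + (j - (s-1)/2)/n + O(1/n²)`, the
first-order terms cancel because `j - (s-1)/2` sums to zero over `j < s`; hence `c D = 1 + O(1/n²)`.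
Together with `D ≥ s/n` the error is `O(H_n / n)`, which tends to zero since `H_n ≤ 1 + log n`.
-/

/-- The n-th harmonic number `H_n = ∑_{k=1}^n 1/k`. -/
noncomputable def harm (n : ℕ) : ℝ := ∑ k ∈ Finset.range n, 1 / ((k : ℝ) + 1)

open Finset Filter Topology

lemma harm_nonneg (n : ℕ) : 0 ≤ harm n :=
  sum_nonneg fun k _ => by positivity

lemma harm_succ (n : ℕ) : harm (n + 1) = harm n + 1 / ((n : ℝ) + 1) :=
  sum_range_succ _ _

lemma harm_eq_harmonic (n : ℕ) : harm n = harmonic n := by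
  simp [harm, harmonic]

lemma tendsto_harm_div_atTop : Tendsto (fun n : ℕ => harm n / n) atTop (𝓝 0) := by
  have hlog : Tendsto (fun n : ℕ => 1 / (n : ℝ) + Real.log n / n) atTop (𝓝 0) := by
    simpa using tendsto_one_div_atTop_nhds_zero_nat.add
      (Real.isLittleO_log_id_atTop.tendsto_div_nhds_zero.comp tendsto_natCast_atTop_atTop)
  refine squeeze_zero (fun n => div_nonneg (harm_nonneg n) n.cast_nonneg) (fun n => ?_) hlog
  rw [← add_div]
  exact div_le_div_of_nonneg_right (harm_eq_harmonic n ▸ harmonic_le_one_add_log n)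
    n.cast_nonneg

lemma harm_sub_harm_sub {n s : ℕ} (h : s ≤ n) :
    harm n - harm (n - s) = ∑ j ∈ range s, 1 / ((n : ℝ) - j) := by
  induction s with
  | zero => simp
  | succ s ih =>
    obtain ⟨m, hm⟩ : ∃ m, n - s = m + 1 := ⟨n - s - 1, by omega⟩
    have hcast : (n : ℝ) - s = m + 1 := by
      rw [← Nat.cast_sub (by omega), hm, Nat.cast_succ]
    rw [sum_range_succ, ← ih (by omega), show n - (s + 1) = m by omega, hcast, hm, harm_succ]
    ring

lemma sum_range_sub_half (s : ℕ) : ∑ j ∈ range s, ((j : ℝ) - ((s : ℝ) - 1) / 2) = 0 := by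
  have hgauss : ∑ j ∈ range s, (j : ℝ) * 2 = s * ((s : ℝ) - 1) := by
    induction s with
    | zero => simp
    | succ s ih => rw [sum_range_succ, ih]; push_cast; ring
  rw [← sum_mul] at hgauss
  rw [sum_sub_distrib, sum_const, card_range, nsmul_eq_mul]
  linarith

lemma sum_div_sub_sub_card {s : ℕ} {x : ℝ} (hsx : (s : ℝ) < x) :
    ∑ j ∈ range s, (x - ((s : ℝ) - 1) / 2) / (x - j) - s
      = ∑ j ∈ range s, ((j : ℝ) - ((s : ℝ) - 1) / 2) * j / (x * (x - j)) := by
  have hx : 0 < x := lt_of_le_of_lt s.cast_nonneg hsx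
  have hterm : ∀ j ∈ range s, (x - ((s : ℝ) - 1) / 2) / (x - j) - 1
      = ((j : ℝ) - ((s : ℝ) - 1) / 2) / x + ((j : ℝ) - ((s : ℝ) - 1) / 2) * j / (x * (x - j)) := by
    intro j hj
    have hjx : (j : ℝ) < x := lt_trans (by exact_mod_cast mem_range.1 hj) hsx
    field_simp [hx.ne', (sub_pos.2 hjx).ne']
    ring
  have hfirst : ∑ j ∈ range s, ((j : ℝ) - ((s : ℝ) - 1) / 2) / x = 0 := by
    rw [← sum_div, sum_range_sub_half, zero_div]
  calc ∑ j ∈ range s, (x - ((s : ℝ) - 1) / 2) / (x - j) - s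
      = ∑ j ∈ range s, ((x - ((s : ℝ) - 1) / 2) / (x - j) - 1) := by simp [sum_sub_distrib]
    _ = _ := by rw [sum_congr rfl hterm, sum_add_distrib, hfirst, zero_add]

lemma abs_sum_div_sub_sub_card_le {s : ℕ} {x : ℝ} (hx : 0 < x) (hsx : 2 * (s : ℝ) ≤ x) :
    |∑ j ∈ range s, (x - ((s : ℝ) - 1) / 2) / (x - j) - s| ≤ s ^ 3 / x ^ 2 := by
  have hs : (s : ℝ) < x := by linarith [s.cast_nonneg (α := ℝ)]
  rw [sum_div_sub_sub_card hs]
  refine (abs_sum_le_sum_abs _ _).trans ?_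
  calc ∑ j ∈ range s, |((j : ℝ) - ((s : ℝ) - 1) / 2) * j / (x * (x - j))|
      ≤ ∑ _j ∈ range s, (s : ℝ) ^ 2 / x ^ 2 := sum_le_sum fun j hj => ?_
    _ = s ^ 3 / x ^ 2 := by rw [sum_const, card_range, nsmul_eq_mul]; ring
  have hjs : (j : ℝ) + 1 ≤ s := by exact_mod_cast mem_range.1 hj
  have hj0 : (0 : ℝ) ≤ j := j.cast_nonneg
  have hmid : |(j : ℝ) - ((s : ℝ) - 1) / 2| ≤ s / 2 := abs_le.2 ⟨by linarith, by linarith⟩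
  have hxj : x / 2 ≤ x - j := by linarith
  rw [abs_div, abs_mul, abs_of_nonneg hj0, abs_of_pos (mul_pos hx (by linarith))]
  calc |(j : ℝ) - ((s : ℝ) - 1) / 2| * j / (x * (x - j))
      ≤ (s / 2) * s / (x * (x / 2)) := by
        gcongr; exact_mod_cast (mem_range.1 hj).le
    _ = s ^ 2 / x ^ 2 := by field_simp

lemma div_le_sum_one_div_sub {s : ℕ} {x : ℝ} (hsx : (s : ℝ) < x) :
    s / x ≤ ∑ j ∈ range s, 1 / (x - j) := by
  calc (s : ℝ) / x = ∑ _j ∈ range s, 1 / x := by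
        rw [sum_const, card_range, nsmul_eq_mul, mul_one_div]
    _ ≤ ∑ j ∈ range s, 1 / (x - j) := sum_le_sum fun j hj => by
        have hjx : (j : ℝ) < x := lt_trans (by exact_mod_cast mem_range.1 hj) hsx
        exact one_div_le_one_div_of_le (sub_pos.2 hjx) (by linarith [j.cast_nonneg (α := ℝ)])

lemma abs_div_sum_one_div_sub_sub_le {s : ℕ} (hs : 0 < s) {x : ℝ} (hsx : 2 * (s : ℝ) ≤ x)
    (h : ℝ) :
    |h / ∑ j ∈ range s, 1 / (x - j) - (x / s * h - ((s : ℝ) - 1) / (2 * s) * h)|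
      ≤ s * |h| / x := by
  set D := ∑ j ∈ range s, 1 / (x - j)
  have hs0 : (0 : ℝ) < s := by exact_mod_cast hs
  have hx : 0 < x := by linarith
  have hD : s / x ≤ D := div_le_sum_one_div_sub (by linarith)
  have hD0 : 0 < D := lt_of_lt_of_le (by positivity) hD
  have hsum : ∑ j ∈ range s, (x - ((s : ℝ) - 1) / 2) / (x - j) = (x - ((s : ℝ) - 1) / 2) * D := by
    simp only [D, mul_sum, mul_one_div]
  have herr : h / D - (x / s * h - ((s : ℝ) - 1) / (2 * s) * h)
      = -(h / (s * D)) * (∑ j ∈ range s, (x - ((s : ℝ) - 1) / 2) / (x - j) - s) := by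
    rw [hsum]; field_simp; ring
  rw [herr, abs_mul, abs_neg, abs_div, abs_of_pos (by positivity : (0 : ℝ) < s * D)]
  calc |h| / (s * D) * |∑ j ∈ range s, (x - ((s : ℝ) - 1) / 2) / (x - j) - s|
      ≤ |h| / (s * (s / x)) * (s ^ 3 / x ^ 2) := by
        gcongr
        exact abs_sum_div_sub_sub_card_le hx hsx
    _ = s * |h| / x := by field_simp

/-- For fixed `s ≥ 2`, `H_n/(H_n − H_{n−s}) = (n/s)·H_n − ((s−1)/(2s))·H_n + o(1)`. -/
theorem stmt1 (s : ℕ) (hs : 2 ≤ s) :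
    Filter.Tendsto (fun n : ℕ =>
        harm n / (harm n - harm (n - s))
          - (((n : ℝ) / s) * harm n - (((s : ℝ) - 1) / (2 * s)) * harm n))
      Filter.atTop (nhds 0) := by
  have hbound : ∀ᶠ n : ℕ in atTop, ‖harm n / (harm n - harm (n - s))
      - (((n : ℝ) / s) * harm n - (((s : ℝ) - 1) / (2 * s)) * harm n)‖ ≤ s * (harm n / n) := by
    filter_upwards [eventually_ge_atTop (2 * s)] with n hn
    have hest := abs_div_sum_one_div_sub_sub_le (s := s) (by omega) (x := n)
      (by exact_mod_cast hn) (harm n)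
    rw [abs_of_nonneg (harm_nonneg n)] at hest
    rwa [Real.norm_eq_abs, harm_sub_harm_sub (by omega), mul_div_assoc']
  exact squeeze_zero_norm' hbound (by simpa using tendsto_harm_div_atTop.const_mul (s : ℝ))
end

section
/- Let Y be the number of draws needed to collect all n coupons where each draw is a uniformly random s-subset. Then for any integer i ≥ 0, P(Y ≤ i) ≤ (1 − ((n−s)/n)^i)^n. -/
open Finset Filter
open scoped Classical

noncomputable section

/-- All tuples of `i` draws, each draw being an `s`-element subset of the `n` coupons.
The drawing process is uniform on this finite set. -/
def draws (n s i : ℕ) : Finset (Fin i → Finset (Fin n)) :=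
  Finset.univ.filter (fun f => ∀ j, (f j).card = s)

/-- The probability, under `i` independent uniform `s`-subset draws from `n` coupons,
of the event `p`. -/
def pr (n s i : ℕ) (p : (Fin i → Finset (Fin n)) → Prop) : ℝ :=
  (((draws n s i).filter p).card : ℝ) / ((draws n s i).card : ℝ)

/-- The event that every coupon has appeared in at least one of the draws. -/
def collected {n i : ℕ} (f : Fin i → Finset (Fin n)) : Prop :=
  ∀ t : Fin n, ∃ j, t ∈ f j

/-- The number of coupons missed by all the draws. -/
def missed {n i : ℕ} (f : Fin i → Finset (Fin n)) : ℕ :=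
  (Finset.univ.filter (fun t : Fin n => ∀ j, t ∉ f j)).card

/-- `P(Y ≥ i)`: the probability that the collection is not complete after `i − 1` draws,
where `Y` is the number of draws needed to collect all `n` coupons. -/
def PYge (n s i : ℕ) : ℝ := pr n s (i - 1) (fun f => ¬ collected f)

/-- `P(Y ≤ i)`: the probability that the collection is complete after `i` draws. -/
def PYle (n s i : ℕ) : ℝ := pr n s i (fun f => collected f)

/-- `P(Y = i)`. -/
def PYeq (n s i : ℕ) : ℝ := PYle n s i - if i = 0 then 0 else PYle n s (i - 1)

/-- `E[Y]`, via the tail-sum formula `E[Y] = ∑_{i≥1} P(Y ≥ i) = ∑_{i≥0} P(Y > i)`. -/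
def EY (n s : ℕ) : ℝ := ∑' i : ℕ, pr n s i (fun f => ¬ collected f)

end

/-
Write `N(T)` for the number of `i`-tuples of `s`-subsets whose union contains `T`, and
`q = (n - s) / n`. For `t ∉ T`, at least `q ^ i * N(T)` of these tuples miss `t`, so
`N(insert t T) ≤ (1 - q ^ i) * N(T)`, and induction on `T` gives
`N(univ) ≤ (n.choose s) ^ i * (1 - q ^ i) ^ n`.

For the inequality with `t ∉ T`, delete `t` from every draw, recording the set `S` of draws that
contained it: what remains covers `T` with subsets of the other `n - 1` coupons, of size `s - 1`
on `S` and `s` elsewhere. Covering `T` is upward closed, so a double count (a local LYM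
inequality) shows that lowering the size of one draw from `s` to `s - 1` multiplies the count by
at most `s / (n - s)`. Summing over `S` by the binomial theorem gives the factor
`(1 + s / (n - s)) ^ i = q⁻¹ ^ i`.
-/
section CoveringTuples

variable {α ι : Type*} [DecidableEq α] [Fintype ι] [DecidableEq ι]

def coveringTuples (U T : Finset α) (c : ι → ℕ) : Finset (ι → Finset α) :=
  {f ∈ Fintype.piFinset fun j => U.powersetCard (c j) | ∀ u ∈ T, ∃ j, u ∈ f j}

theorem mem_coveringTuples {U T : Finset α} {c : ι → ℕ} {f : ι → Finset α} :
    f ∈ coveringTuples U T c ↔ (∀ j, f j ⊆ U ∧ #(f j) = c j) ∧ ∀ u ∈ T, ∃ j, u ∈ f j := by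
  simp only [coveringTuples, mem_filter, Fintype.mem_piFinset, mem_powersetCard]

theorem card_coveringTuples_le_prod (U T : Finset α) (c : ι → ℕ) :
    #(coveringTuples U T c) ≤ ∏ j, (#U).choose (c j) :=
  (card_filter_le _ _).trans_eq (by simp [Fintype.card_piFinset])

theorem card_coveringTuples_mul_le_update (U T : Finset α) (c : ι → ℕ) (j : ι) :
    #(coveringTuples U T c) * (#U - c j) ≤
      #(coveringTuples U T (Function.update c j (c j + 1))) * (c j + 1) := by
  have hA : #((coveringTuples U T c).sigma fun f => U \ f j) =
      #(coveringTuples U T c) * (#U - c j) := by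
    rw [card_sigma, sum_const_nat]
    intro f hf
    obtain ⟨hfU, hfc⟩ := (mem_coveringTuples.1 hf).1 j
    rw [card_sdiff_of_subset hfU, hfc]
  have hB : #((coveringTuples U T (Function.update c j (c j + 1))).sigma fun g => g j) =
      #(coveringTuples U T (Function.update c j (c j + 1))) * (c j + 1) := by
    rw [card_sigma, sum_const_nat]
    intro g hg
    simpa using ((mem_coveringTuples.1 hg).1 j).2
  rw [← hA, ← hB]
  -- the second component remembers which element was added to the `j`-th set
  refine card_le_card_of_injOn (fun p => ⟨Function.update p.1 j (insert p.2 (p.1 j)), p.2⟩)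
    ?_ ?_
  · rintro ⟨f, x⟩ hfx
    simp only [coe_sigma, Set.mem_sigma_iff, mem_coe, Finset.mem_sdiff,
      mem_coveringTuples] at hfx ⊢
    obtain ⟨⟨hf, hcov⟩, hxU, hxf⟩ := hfx
    refine ⟨⟨fun k => ?_, fun u hu => ?_⟩, by simp⟩
    · rcases eq_or_ne k j with rfl | hk
      · simp [insert_subset hxU (hf k).1, card_insert_of_notMem hxf, (hf k).2]
      · simpa [hk] using hf k
    · obtain ⟨k, hk⟩ := hcov u hu
      refine ⟨k, ?_⟩
      rcases eq_or_ne k j with rfl | hkj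
      · simp [hk]
      · simpa [hkj] using hk
  · rintro ⟨f, x⟩ hfx ⟨g, y⟩ hgy h
    simp only [coe_sigma, Set.mem_sigma_iff, mem_coe, Finset.mem_sdiff, Sigma.mk.injEq] at hfx hgy h
    obtain ⟨hfg, rfl⟩ := h
    suffices f = g by rw [this]
    funext k
    have hk := congrFun hfg k
    rcases eq_or_ne k j with rfl | hkj
    · simp only [Function.update_self] at hk
      rw [← erase_insert hfx.2.2, hk, erase_insert hgy.2.2]
    · simpa [hkj] using hk

theorem card_coveringTuples_mul_prod_le (U T : Finset α) (c : ι → ℕ) (S : Finset ι) :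
    #(coveringTuples U T c) * ∏ j ∈ S, (#U - c j) ≤
      #(coveringTuples U T fun j => if j ∈ S then c j + 1 else c j) * ∏ j ∈ S, (c j + 1) := by
  induction S using Finset.induction_on with
  | empty => simp
  | @insert j₀ S hj₀ ih =>
    set c' : ι → ℕ := fun j => if j ∈ S then c j + 1 else c j
    have hc'j₀ : c' j₀ = c j₀ := if_neg hj₀
    have hupdate : Function.update c' j₀ (c' j₀ + 1) =
        fun j => if j ∈ insert j₀ S then c j + 1 else c j := by
      funext j
      rcases eq_or_ne j j₀ with rfl | hj
      · simp [hc'j₀]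
      · simp [c', hj]
    calc #(coveringTuples U T c) * ∏ j ∈ insert j₀ S, (#U - c j)
        = #(coveringTuples U T c) * (∏ j ∈ S, (#U - c j)) * (#U - c' j₀) := by
          rw [prod_insert hj₀, hc'j₀]; ring
      _ ≤ #(coveringTuples U T c') * (∏ j ∈ S, (c j + 1)) * (#U - c' j₀) := by gcongr
      _ = #(coveringTuples U T c') * (#U - c' j₀) * ∏ j ∈ S, (c j + 1) := by ring
      _ ≤ #(coveringTuples U T (Function.update c' j₀ (c' j₀ + 1))) * (c' j₀ + 1) *
          ∏ j ∈ S, (c j + 1) :=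
          Nat.mul_le_mul_right _ (card_coveringTuples_mul_le_update U T c' j₀)
      _ = _ := by rw [hupdate, prod_insert hj₀, hc'j₀]; ring

theorem card_coveringTuples_le_sum_erase (U T : Finset α) (c : ι → ℕ) {t : α} (ht : t ∉ T) :
    #(coveringTuples U T c) ≤
      ∑ S : Finset ι, #(coveringTuples (U.erase t) T fun j => if j ∈ S then c j - 1 else c j) := by
  rw [← card_sigma]
  refine card_le_card_of_injOn (fun f => ⟨({j | t ∈ f j} : Finset ι), fun j => (f j).erase t⟩) ?_ ?_
  · intro f hf
    simp only [coe_sigma, Set.mem_sigma_iff, mem_coe, mem_univ, true_and, mem_coveringTuples,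
      mem_filter] at hf ⊢
    obtain ⟨hf, hcov⟩ := hf
    refine ⟨fun j => ⟨erase_subset_erase t (hf j).1, ?_⟩, fun u hu => ?_⟩
    · split_ifs with htj
      · rw [card_erase_of_mem htj, (hf j).2]
      · rw [erase_eq_of_notMem htj, (hf j).2]
    · obtain ⟨j, hj⟩ := hcov u hu
      exact ⟨j, mem_erase.2 ⟨ne_of_mem_of_not_mem hu ht, hj⟩⟩
  · intro f _ g _ h
    simp only [Sigma.mk.injEq, heq_eq_eq, funext_iff, Finset.ext_iff, mem_filter, mem_univ,
      true_and, mem_erase] at h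
    obtain ⟨hmem, herase⟩ := h
    funext j
    ext u
    rcases eq_or_ne u t with rfl | hut
    · exact hmem j
    · simpa [hut] using herase j u

theorem pow_mul_card_coveringTuples_le {U T : Finset α} {t : α} (htU : t ∈ U) (htT : t ∉ T)
    {s : ℕ} (hs : 1 ≤ s) (hsU : s ≤ #U) :
    (#U - s) ^ Fintype.card ι * #(coveringTuples U T fun (_ : ι) => s) ≤
      #U ^ Fintype.card ι * #(coveringTuples (U.erase t) T fun (_ : ι) => s) := by
  set M := #(coveringTuples (U.erase t) T fun (_ : ι) => s)
  have hterm (S : Finset ι) :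
      #(coveringTuples (U.erase t) T fun j => if j ∈ S then s - 1 else s) * (#U - s) ^ #S ≤
        M * s ^ #S := by
    have h := card_coveringTuples_mul_prod_le (U.erase t) T
      (fun j => if j ∈ S then s - 1 else s) S
    have hlower : ∏ j ∈ S, (#(U.erase t) - if j ∈ S then s - 1 else s) = (#U - s) ^ #S := by
      rw [prod_congr rfl fun j hj => by rw [if_pos hj, card_erase_of_mem htU], prod_const]
      congr 1
      omega
    have hupper : ∏ j ∈ S, ((if j ∈ S then s - 1 else s) + 1) = s ^ #S := by
      rw [prod_congr rfl fun j hj => by rw [if_pos hj, Nat.sub_add_cancel hs], prod_const]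
    have hraise : (fun j => if j ∈ S then (if j ∈ S then s - 1 else s) + 1
        else if j ∈ S then s - 1 else s) = fun _ => s := by
      funext j
      split_ifs <;> omega
    rwa [hlower, hupper, hraise] at h
  calc (#U - s) ^ Fintype.card ι * #(coveringTuples U T fun (_ : ι) => s)
      ≤ (#U - s) ^ Fintype.card ι *
          ∑ S : Finset ι, #(coveringTuples (U.erase t) T fun j => if j ∈ S then s - 1 else s) := by
        gcongr
        exact card_coveringTuples_le_sum_erase U T _ htT
    _ = ∑ S : Finset ι, #(coveringTuples (U.erase t) T fun j => if j ∈ S then s - 1 else s) *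
          (#U - s) ^ #S * (#U - s) ^ (Fintype.card ι - #S) := by
        rw [mul_sum]
        refine sum_congr rfl fun S _ => ?_
        rw [mul_assoc, ← pow_add, Nat.add_sub_cancel' (card_le_univ S), mul_comm]
    _ ≤ ∑ S : Finset ι, M * s ^ #S * (#U - s) ^ (Fintype.card ι - #S) :=
        sum_le_sum fun S _ => Nat.mul_le_mul_right _ (hterm S)
    _ = #U ^ Fintype.card ι * M := by
        simp_rw [mul_assoc]
        rw [← mul_sum, Fintype.sum_pow_mul_eq_add_pow, Nat.add_sub_cancel' hsU, mul_comm]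

theorem card_coveringTuples_insert_add_erase (U T : Finset α) (c : ι → ℕ) (t : α) :
    #(coveringTuples U (insert t T) c) + #(coveringTuples (U.erase t) T c) =
      #(coveringTuples U T c) := by
  rw [← card_filter_add_card_filter_not (s := coveringTuples U T c) (fun f => ∃ j, t ∈ f j)]
  congr 2 <;> ext f <;>
    simp only [mem_filter, mem_coveringTuples, forall_mem_insert, subset_erase, not_exists,
      forall_and] <;>
    tauto

noncomputable def missProb (n s : ℕ) : ℝ := ((n : ℝ) - s) / n

theorem missProb_pow_le_one {n s : ℕ} (hsn : s ≤ n) (k : ℕ) : missProb n s ^ k ≤ 1 := by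
  have : (s : ℝ) ≤ n := mod_cast hsn
  exact pow_le_one₀ (div_nonneg (by linarith) n.cast_nonneg)
    (div_le_one_of_le₀ (by linarith [s.cast_nonneg (α := ℝ)]) n.cast_nonneg)

variable [Fintype α]

theorem card_coveringTuples_insert_le {T : Finset α} {t : α} (ht : t ∉ T) {s : ℕ} (hs : 1 ≤ s)
    (hsα : s ≤ Fintype.card α) :
    (#(coveringTuples univ (insert t T) fun (_ : ι) => s) : ℝ) ≤
      (1 - missProb (Fintype.card α) s ^ Fintype.card ι) *
        #(coveringTuples univ T fun (_ : ι) => s) := by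
  have hsplit : (#(coveringTuples univ (insert t T) fun (_ : ι) => s) : ℝ) +
      #(coveringTuples (univ.erase t) T fun (_ : ι) => s) =
        #(coveringTuples univ T fun (_ : ι) => s) :=
    mod_cast card_coveringTuples_insert_add_erase univ T _ t
  have hmiss : missProb (Fintype.card α) s ^ Fintype.card ι *
      #(coveringTuples univ T fun (_ : ι) => s) ≤
        #(coveringTuples (univ.erase t) T fun (_ : ι) => s) := by
    have hkey := pow_mul_card_coveringTuples_le (ι := ι) (mem_univ t) ht hs (by rwa [card_univ])
    rw [card_univ] at hkey
    have hα : (0 : ℝ) < Fintype.card α := mod_cast Fintype.card_pos_iff.2 ⟨t⟩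
    rw [missProb, div_pow, div_mul_eq_mul_div, div_le_iff₀ (by positivity), mul_comm _ (_ ^ _)]
    have hkeyℝ := (Nat.cast_le (α := ℝ)).2 hkey
    push_cast [Nat.cast_sub hsα] at hkeyℝ
    exact hkeyℝ
  linarith

theorem card_coveringTuples_le (T : Finset α) {s : ℕ} (hs : 1 ≤ s) (hsα : s ≤ Fintype.card α) :
    (#(coveringTuples univ T fun (_ : ι) => s) : ℝ) ≤
      (Fintype.card α).choose s ^ Fintype.card ι *
        (1 - missProb (Fintype.card α) s ^ Fintype.card ι) ^ #T := by
  induction T using Finset.induction_on with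
  | empty =>
    simpa using (Nat.cast_le (α := ℝ)).2 (card_coveringTuples_le_prod univ ∅ fun (_ : ι) => s)
  | @insert t T ht ih =>
    have hq := missProb_pow_le_one hsα (Fintype.card ι)
    calc (#(coveringTuples univ (insert t T) fun (_ : ι) => s) : ℝ)
        ≤ (1 - missProb (Fintype.card α) s ^ Fintype.card ι) *
            #(coveringTuples univ T fun (_ : ι) => s) := card_coveringTuples_insert_le ht hs hsα
      _ ≤ _ := by
        rw [card_insert_of_notMem ht, pow_succ]
        nlinarith

end CoveringTuples

theorem stmt5_general (n s i : ℕ) (hs1 : 1 ≤ s) (hsn : s ≤ n) :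
    PYle n s i ≤ (1 - (((n : ℝ) - s) / n) ^ i) ^ n := by
  have hdraws : #(draws n s i) = n.choose s ^ i := by
    have : draws n s i = Fintype.piFinset fun _ => univ.powersetCard s := by
      ext f
      simp [draws]
    simp [this, Fintype.card_piFinset]
  have hcollected : (draws n s i).filter collected = coveringTuples univ univ fun _ => s := by
    ext f
    simp [draws, collected, mem_coveringTuples]
  have hbound := card_coveringTuples_le (ι := Fin i) (univ : Finset (Fin n)) hs1 (by simpa)
  simp only [Fintype.card_fin, card_univ] at hbound
  have hpos : (0 : ℝ) < n.choose s ^ i := mod_cast pow_pos (Nat.choose_pos hsn) i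
  rw [PYle, pr, hcollected, hdraws, Nat.cast_pow, div_le_iff₀ hpos, mul_comm]
  exact hbound

/-- Negative association bound: `P(Y ≤ i) ≤ (1 − ((n−s)/n)^i)^n`. -/
theorem stmt5 (n s i : ℕ) (hn : 1 ≤ n) (hs1 : 1 ≤ s) (hsn : s ≤ n) :
    PYle n s i ≤ (1 - (((n : ℝ) - s) / n) ^ i) ^ n :=
  stmt5_general n s i hs1 hsn
end

section
/- Let 0 < c < 1 and let g(x) = ∑_{i=1}^∞ (1 − e^{−(1−c)^{i−x−1}} − e^{−(1−c)^{−i−x}}) for x ∈ [0,1). Then lim_{x→1⁻} g(x) = g(0) + 1. -/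
/-!
With `q = 1 - c` and `E t = exp (-q ^ t)`, the `i`-th summand of `g x` is
`1 - E (i - x) - E (-i - 1 - x)`. Its modulus is at most `q ^ (i - 1) + q ^ (i + 1)` for
`x ∈ [0, 1]`, so the series converges uniformly there and `g` is continuous on `[0, 1]`; the
one-sided limit at `1` is therefore `g 1`. Shifting `x` by one shifts the index of both
families of exponentials, so `g 1 - g 0` telescopes to `lim_{t → ∞} E t - lim_{t → -∞} E t = 1`.
-/

/-- `g(x) = ∑_{i=1}^∞ (1 − e^{−(1−c)^{i−x−1}} − e^{−(1−c)^{−i−x}})`. -/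
noncomputable def g (c x : ℝ) : ℝ :=
  ∑' i : ℕ, (1 - Real.exp (-(1 - c) ^ (((i : ℝ) + 1) - x - 1))
               - Real.exp (-(1 - c) ^ (-((i : ℝ) + 1) - x)))

open Real Filter Topology Set

theorem tsum_succ_sub_eq_of_tendsto {G : Type*} [AddCommGroup G] [TopologicalSpace G]
    [IsTopologicalAddGroup G] [T2Space G] {f : ℕ → G} {l : G}
    (hs : Summable fun n => f (n + 1) - f n) (hf : Tendsto f atTop (𝓝 l)) :
    ∑' n, (f (n + 1) - f n) = l - f 0 := by
  refine tendsto_nhds_unique hs.hasSum.tendsto_sum_nat ?_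
  simpa only [Finset.sum_range_sub] using hf.sub_const (f 0)

namespace ShiftedExpSeries

noncomputable def expNegRpow (q t : ℝ) : ℝ := exp (-q ^ t)

noncomputable def summand (q x : ℝ) (i : ℕ) : ℝ :=
  1 - expNegRpow q (i - x) - expNegRpow q (-i - 1 - x)

noncomputable def series (q x : ℝ) : ℝ := ∑' i, summand q x i

theorem g_eq_series (c : ℝ) : g c = series (1 - c) := by
  ext x
  refine tsum_congr fun i => ?_
  rw [summand, expNegRpow, expNegRpow]
  ring_nf

theorem expNegRpow_nonneg (q t : ℝ) : 0 ≤ expNegRpow q t := (exp_pos _).le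

theorem one_sub_expNegRpow_le (q t : ℝ) : 1 - expNegRpow q t ≤ q ^ t := by
  linarith [add_one_le_exp (-q ^ t), show expNegRpow q t = exp (-q ^ t) from rfl]

section

variable {q : ℝ} (hq : 0 < q)
include hq

theorem expNegRpow_le_one (t : ℝ) : expNegRpow q t ≤ 1 :=
  exp_le_one_iff.mpr (neg_nonpos.mpr (rpow_pos_of_pos hq t).le)

theorem expNegRpow_le (t : ℝ) : expNegRpow q t ≤ q ^ (-t) := by
  have hpos := rpow_pos_of_pos hq t
  calc expNegRpow q t = (exp (q ^ t))⁻¹ := exp_neg _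
    _ ≤ (q ^ t)⁻¹ := inv_anti₀ hpos (by linarith [add_one_le_exp (q ^ t)])
    _ = q ^ (-t) := (rpow_neg hq.le t).symm

theorem continuous_summand (i : ℕ) : Continuous fun x => summand q x i := by
  have := continuous_const_rpow hq.ne'
  unfold summand expNegRpow
  fun_prop

variable (hq1 : q < 1)
include hq1

theorem abs_summand_le {x : ℝ} (hx : x ∈ Icc 0 1) (i : ℕ) :
    |summand q x i| ≤ q ^ ((i : ℝ) - 1) + q ^ ((i : ℝ) + 1) := by
  have hA : 1 - expNegRpow q (i - x) ≤ q ^ ((i : ℝ) - 1) :=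
    (one_sub_expNegRpow_le _ _).trans
      (rpow_le_rpow_of_exponent_ge hq hq1.le (by linarith [hx.2]))
  have hB : expNegRpow q (-i - 1 - x) ≤ q ^ ((i : ℝ) + 1) :=
    (expNegRpow_le hq _).trans
      (rpow_le_rpow_of_exponent_ge hq hq1.le (by linarith [hx.1]))
  have hA1 := expNegRpow_le_one hq (i - x)
  have hB0 := expNegRpow_nonneg q (-i - 1 - x)
  have := rpow_pos_of_pos hq ((i : ℝ) - 1)
  have := rpow_pos_of_pos hq ((i : ℝ) + 1)
  rw [summand, abs_le]
  constructor <;> linarith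

theorem summable_rpow_natCast_add (a : ℝ) : Summable fun i : ℕ => q ^ ((i : ℝ) + a) := by
  simp_rw [rpow_add hq, rpow_natCast]
  exact (summable_geometric_of_lt_one hq.le hq1).mul_right _

theorem summable_summand_bound :
    Summable fun i : ℕ => q ^ ((i : ℝ) - 1) + q ^ ((i : ℝ) + 1) := by
  simpa only [sub_eq_add_neg] using
    (summable_rpow_natCast_add hq hq1 (-1)).add (summable_rpow_natCast_add hq hq1 1)

theorem summable_summand {x : ℝ} (hx : x ∈ Icc 0 1) : Summable (summand q x) :=
  .of_norm_bounded (summable_summand_bound hq hq1) fun i =>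
    (norm_eq_abs _).trans_le (abs_summand_le hq hq1 hx i)

theorem continuousOn_series : ContinuousOn (series q) (Icc 0 1) :=
  continuousOn_tsum (fun i => (continuous_summand hq i).continuousOn)
    (summable_summand_bound hq hq1) fun i _ hx =>
      (norm_eq_abs _).trans_le (abs_summand_le hq hq1 hx i)

theorem tendsto_expNegRpow_atTop : Tendsto (expNegRpow q) atTop (𝓝 1) :=
  (continuous_exp.tendsto' 0 1 exp_zero).comp <| by
    simpa only [neg_zero] using (tendsto_rpow_atTop_of_base_lt_one q (by linarith) hq1).neg

theorem tendsto_expNegRpow_atBot : Tendsto (expNegRpow q) atBot (𝓝 0) :=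
  tendsto_exp_neg_atTop_nhds_zero.comp (tendsto_rpow_atBot_of_base_lt_one q hq hq1)

theorem series_one : series q 1 = series q 0 + 1 := by
  let φ : ℕ → ℝ := fun n => expNegRpow q (n - 1) - expNegRpow q (-n - 1)
  have hshift (i : ℕ) : summand q 1 i - summand q 0 i = φ (i + 1) - φ i := by
    simp only [summand, φ]
    push_cast
    ring_nf
  have hφ : Tendsto φ atTop (𝓝 (1 - 0)) := by
    have hn := tendsto_natCast_atTop_atTop (R := ℝ)
    refine ((tendsto_expNegRpow_atTop hq hq1).comp ?_).sub
      ((tendsto_expNegRpow_atBot hq hq1).comp ?_)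
    · exact tendsto_atTop_add_const_right _ (-1) hn
    · exact tendsto_atBot_add_const_right _ (-1) (tendsto_neg_atTop_atBot.comp hn)
  have hs1 := summable_summand hq hq1 (right_mem_Icc.2 zero_le_one)
  have hs0 := summable_summand hq hq1 (left_mem_Icc.2 zero_le_one)
  have hsum := tsum_succ_sub_eq_of_tendsto (by simpa only [hshift] using hs1.sub hs0) hφ
  simp only [← hshift, φ, Nat.cast_zero, neg_zero, sub_self, sub_zero] at hsum
  rw [series, series, ← sub_eq_iff_eq_add', ← hs1.tsum_sub hs0, hsum]

end

end ShiftedExpSeries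

open ShiftedExpSeries in
/-- `lim_{x→1⁻} g(x) = g(0) + 1`. -/
theorem stmt11 (c : ℝ) (hc : 0 < c) (hc1 : c < 1) :
    Filter.Tendsto (g c) (nhdsWithin 1 (Set.Iio 1)) (nhds (g c 0 + 1)) := by
  have hq : 0 < 1 - c := by linarith
  have hq1 : 1 - c < 1 := by linarith
  rw [g_eq_series, ← series_one hq hq1]
  exact ((continuousOn_series hq hq1 1 ⟨zero_le_one, le_rfl⟩).mono_of_mem_nhdsWithin
    (Icc_mem_nhdsLT zero_lt_one)).tendsto
end

section
/- Let t ≥ 2, λ > 0, s(n) = n − ⌈λ n^{(t−1)/t}⌉, and let X_t be the number of coupons missed after t independent uniform s(n)-subset draws from n coupons. Then X_t converges in distribution to a Poisson random variable with mean λ^t as n → ∞. -/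
open Finset Filter
open scoped Classical

/-!
Method of moments via Bonferroni's inequalities. Since `C(k+j, j) C(x, k+j) = C(x, k) C(x-k, j)`,
the partial sums `∑_{j ≤ J} (-1)^j C(k+j, j) C(x, k+j)` are partial alternating sums of a row of
Pascal's triangle; they approximate the indicator `[x = k]` with error at most the next term. Averaging,
`P(X = k)` is squeezed between alternating combinations of factorial moments `E[C(X, a)]`, so it suffices
that `E[C(X, a)] → μ^a / a!`, the factorial moments of `Po(μ)`.

For the coupon collector, double counting gives `E[C(X_t, a)] = C(n, a) (C(n-a, s) / C(n, s))^t`,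
which with `m = n - s` equals `C(m, a)^t / C(n, a)^(t-1) ~ (m^t / n^(t-1))^a / a!`. The choice
`m = ⌈λ n^((t-1)/t)⌉` makes `m^t / n^(t-1) → λ^t`.
-/

open Topology Asymptotics
open scoped Nat

lemma abs_ite_eq_sub_sum_choose_le (x k J : ℕ) :
    |(if x = k then 1 else 0 : ℝ)
        - ∑ j ∈ range (J + 1), (-1) ^ j * ((k + j).choose j * x.choose (k + j) : ℝ)|
      ≤ (k + (J + 1)).choose (J + 1) * x.choose (k + (J + 1)) := by
  have hfactor (j : ℕ) : (k + j).choose j * x.choose (k + j) = x.choose k * (x - k).choose j := by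
    have h := Nat.choose_mul (n := x) (k := k + j) (s := k) (Nat.le_add_right k j)
    rw [Nat.choose_symm_add, Nat.add_sub_cancel_left] at h
    rw [mul_comm, h]
  have hsum : ∑ j ∈ range (J + 1), (-1) ^ j * ((k + j).choose j * x.choose (k + j) : ℝ)
      = x.choose k * ∑ j ∈ range (J + 1), (-1) ^ j * ((x - k).choose j : ℝ) := by
    rw [mul_sum]
    refine sum_congr rfl fun j _ => ?_
    rw [← Nat.cast_mul, hfactor]
    push_cast
    ring
  rw [hsum]
  rcases lt_trichotomy x k with hlt | rfl | hgt
  · simp only [hlt.ne, if_false, Nat.choose_eq_zero_of_lt hlt, Nat.cast_zero, zero_mul, sub_zero,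
      abs_zero]
    positivity
  · simp [sum_range_succ', Nat.choose_eq_zero_of_lt]
  · obtain ⟨y, rfl⟩ := Nat.exists_eq_add_of_lt hgt
    have hsub : k + y + 1 - k = y + 1 := by omega
    have halt : ∑ j ∈ range (J + 1), (-1) ^ j * ((y + 1).choose j : ℝ) = (-1) ^ J * y.choose J := by
      exact_mod_cast Int.alternating_sum_range_choose_eq_choose
    rw [if_neg (by omega), hsub, halt]
    calc |0 - ((k + y + 1).choose k : ℝ) * ((-1) ^ J * y.choose J)|
        = (k + y + 1).choose k * y.choose J := by simp [abs_mul]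
      _ ≤ (k + y + 1).choose k * (y + 1).choose (J + 1) := by
        gcongr
        exact_mod_cast (Nat.choose_succ_succ y J).symm ▸ Nat.le_add_right _ _
      _ = _ := by
        rw [← hsub]
        exact_mod_cast (hfactor (J + 1)).symm

lemma abs_card_filter_eq_sub_sum_le {α : Type*} (S : Finset α) (X : α → ℕ) (k J : ℕ) :
    |(#(S.filter (X · = k)) : ℝ)
        - ∑ j ∈ range (J + 1), (-1) ^ j * ((k + j).choose j * ∑ f ∈ S, ((X f).choose (k + j) : ℝ))|
      ≤ (k + (J + 1)).choose (J + 1) * ∑ f ∈ S, ((X f).choose (k + (J + 1)) : ℝ) := by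
  calc _ = |∑ f ∈ S, ((if X f = k then 1 else 0 : ℝ)
          - ∑ j ∈ range (J + 1), (-1) ^ j * ((k + j).choose j * (X f).choose (k + j) : ℝ))| := by
        simp_rw [natCast_card_filter, sum_sub_distrib, mul_sum]
        rw [sum_comm]
    _ ≤ ∑ f ∈ S, |(if X f = k then 1 else 0 : ℝ)
          - ∑ j ∈ range (J + 1), (-1) ^ j * ((k + j).choose j * (X f).choose (k + j) : ℝ)| :=
        abs_sum_le_sum_abs _ _
    _ ≤ _ := by
        rw [mul_sum]
        exact sum_le_sum fun f _ => abs_ite_eq_sub_sum_choose_le _ _ _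

lemma add_choose_mul_pow_div_factorial (μ : ℝ) (k j : ℕ) :
    (k + j).choose j * (μ ^ (k + j) / (k + j)!) = μ ^ k / k ! * (μ ^ j / j !) := by
  rw [← Nat.add_choose_mul_factorial_mul_factorial k j]
  have : ((k + j).choose j : ℝ) ≠ 0 := by exact_mod_cast (Nat.choose_pos (by omega)).ne'
  push_cast
  field_simp
  ring

theorem tendsto_poisson_of_bonferroni {ι : Type*} {l : Filter ι} {P : ι → ℝ} {M : ℕ → ι → ℝ}
    {μ : ℝ} (k : ℕ) (hM : ∀ a, Tendsto (M a) l (𝓝 (μ ^ a / a !)))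
    (hP : ∀ J i, |P i - ∑ j ∈ range (J + 1), (-1) ^ j * ((k + j).choose j * M (k + j) i)|
      ≤ (k + (J + 1)).choose (J + 1) * M (k + (J + 1)) i) :
    Tendsto P l (𝓝 (Real.exp (-μ) * μ ^ k / k !)) := by
  have hpartial : Tendsto (fun J => ∑ j ∈ range (J + 1),
      (-1) ^ j * ((k + j).choose j * (μ ^ (k + j) / (k + j)!))) atTop
      (𝓝 (Real.exp (-μ) * μ ^ k / k !)) := by
    have hexp : HasSum (fun j => (-μ) ^ j / j !) (Real.exp (-μ)) := by
      rw [Real.exp_eq_exp_ℝ]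
      exact NormedSpace.expSeries_div_hasSum_exp (-μ)
    have h := ((tendsto_add_atTop_iff_nat 1).2 hexp.tendsto_sum_nat).const_mul (μ ^ k / k !)
    rw [show Real.exp (-μ) * μ ^ k / k ! = μ ^ k / k ! * Real.exp (-μ) by ring]
    refine h.congr fun J => ?_
    rw [mul_sum]
    refine sum_congr rfl fun j _ => ?_
    rw [add_choose_mul_pow_div_factorial, neg_pow]
    ring
  have herror : Tendsto (fun J => (k + (J + 1)).choose (J + 1) * (μ ^ (k + (J + 1)) / (k + (J + 1))!))
      atTop (𝓝 0) := by
    simp_rw [add_choose_mul_pow_div_factorial]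
    simpa using ((FloorSemiring.tendsto_pow_div_factorial_atTop μ).comp
      (tendsto_add_atTop_nat 1)).const_mul (μ ^ k / k !)
  rw [Metric.tendsto_nhds]
  intro ε hε
  obtain ⟨J, hJpartial, hJerror⟩ := ((Metric.tendsto_nhds.1 hpartial (ε / 4) (by positivity)).and
    (Metric.tendsto_nhds.1 herror (ε / 4) (by positivity))).exists
  have hsum := tendsto_finsetSum (range (J + 1)) fun j _ =>
    ((hM (k + j)).const_mul ((k + j).choose j : ℝ)).const_mul ((-1 : ℝ) ^ j)
  have hlast := (hM (k + (J + 1))).const_mul ((k + (J + 1)).choose (J + 1) : ℝ)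
  filter_upwards [Metric.tendsto_nhds.1 hsum (ε / 4) (by positivity),
    Metric.tendsto_nhds.1 hlast (ε / 4) (by positivity)] with i hsumi hlasti
  rw [Real.dist_eq, abs_sub_lt_iff] at hlasti
  rw [Real.dist_eq, sub_zero, abs_lt] at hJerror
  have hPi := hP J i
  rw [← Real.dist_eq] at hPi
  linarith [dist_triangle4 (P i) (∑ j ∈ range (J + 1), (-1) ^ j * ((k + j).choose j * M (k + j) i))
    (∑ j ∈ range (J + 1), (-1) ^ j * ((k + j).choose j * (μ ^ (k + j) / (k + j)!)))
    (Real.exp (-μ) * μ ^ k / k !), hlasti.1, hJerror.2]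

theorem tendsto_card_filter_div_card_poisson {ι : Type*} {l : Filter ι} {α : ι → Type*}
    (S : ∀ i, Finset (α i)) (X : ∀ i, α i → ℕ) {μ : ℝ} (k : ℕ)
    (hmom : ∀ a, Tendsto (fun i => (∑ f ∈ S i, ((X i f).choose a : ℝ)) / #(S i)) l
      (𝓝 (μ ^ a / a !))) :
    Tendsto (fun i => (#((S i).filter (X i · = k)) : ℝ) / #(S i)) l
      (𝓝 (Real.exp (-μ) * μ ^ k / k !)) := by
  refine tendsto_poisson_of_bonferroni k hmom fun J i => ?_
  have h := abs_card_filter_eq_sub_sum_le (S i) (X i) k J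
  have hrw : (#((S i).filter (X i · = k)) : ℝ) / #(S i) - ∑ j ∈ range (J + 1), (-1) ^ j *
        ((k + j).choose j * ((∑ f ∈ S i, ((X i f).choose (k + j) : ℝ)) / #(S i)))
      = ((#((S i).filter (X i · = k)) : ℝ) - ∑ j ∈ range (J + 1), (-1) ^ j *
        ((k + j).choose j * ∑ f ∈ S i, ((X i f).choose (k + j) : ℝ))) / #(S i) := by
    rw [sub_div, sum_div]
    simp_rw [mul_div_assoc]
  rw [hrw, abs_div, Nat.abs_cast, ← mul_div_assoc]
  exact div_le_div_of_nonneg_right h (Nat.cast_nonneg _)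

lemma card_draws (n s i : ℕ) : #(draws n s i) = n.choose s ^ i := by
  have : draws n s i = Fintype.piFinset fun _ => powersetCard s univ := by
    ext f
    simp [draws, Fintype.mem_piFinset]
  rw [this, Fintype.card_piFinset, prod_const, card_powersetCard, card_univ, Fintype.card_fin,
    card_univ, Fintype.card_fin]

lemma sum_choose_missed (n s i a : ℕ) :
    ∑ f ∈ draws n s i, (missed f).choose a = n.choose a * (n - a).choose s ^ i := by
  -- double count the pairs (draws, `a`-set of coupons that all draws avoid)
  let r (f : Fin i → Finset (Fin n)) (A : Finset (Fin n)) : Prop := ∀ j, Disjoint A (f j)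
  have habove (f : Fin i → Finset (Fin n)) :
      (missed f).choose a = #((powersetCard a univ).bipartiteAbove r f) := by
    rw [missed, ← card_powersetCard]
    congr 1
    ext A
    simp only [bipartiteAbove, r, mem_filter, mem_powersetCard, subset_iff, disjoint_left, mem_univ,
      true_and, implies_true]
    exact ⟨fun ⟨hA, hcard⟩ => ⟨hcard, fun j x hx => hA hx j⟩,
      fun ⟨hcard, hA⟩ => ⟨fun x hx j => hA j hx, hcard⟩⟩
  have hbelow (A : Finset (Fin n)) (hA : A ∈ powersetCard a univ) :
      #((draws n s i).bipartiteBelow r A) = (n - a).choose s ^ i := by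
    have : (draws n s i).bipartiteBelow r A = Fintype.piFinset fun _ => powersetCard s Aᶜ := by
      ext f
      simp [bipartiteBelow, r, draws, Fintype.mem_piFinset, mem_powersetCard, subset_iff,
        disjoint_right, forall_and, and_comm]
    rw [this, Fintype.card_piFinset, prod_const, card_powersetCard, card_compl,
      (mem_powersetCard_univ.1 hA), Fintype.card_fin, card_univ, Fintype.card_fin]
  simp_rw [habove]
  rw [sum_card_bipartiteAbove_eq_sum_card_bipartiteBelow, sum_congr rfl hbelow, sum_const,
    card_powersetCard, card_univ, Fintype.card_fin, smul_eq_mul]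

lemma choose_mul_choose_sub_sub {n m : ℕ} (a : ℕ) (hmn : m ≤ n) :
    n.choose a * (n - a).choose (n - m) = n.choose (n - m) * m.choose a := by
  rcases le_or_gt a m with ham | hma
  · rw [Nat.choose_symm hmn, Nat.choose_mul ham,
      Nat.choose_symm_of_eq_add (by omega : n - a = (n - m) + (m - a))]
  · rw [Nat.choose_eq_zero_of_lt hma, mul_zero]
    rcases le_or_gt a n with han | hna
    · rw [Nat.choose_eq_zero_of_lt (by omega : n - a < n - m), mul_zero]
    · rw [Nat.choose_eq_zero_of_lt hna, zero_mul]

lemma sum_choose_missed_div_card_draws {n m t : ℕ} (a : ℕ) (ht : t ≠ 0) (hmn : m ≤ n) (han : a ≤ n) :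
    (∑ f ∈ draws n (n - m) t, ((missed f).choose a : ℝ)) / #(draws n (n - m) t)
      = (m.choose a : ℝ) ^ t / (n.choose a : ℝ) ^ (t - 1) := by
  obtain ⟨t, rfl⟩ := Nat.exists_eq_add_one_of_ne_zero ht
  have hid : (n.choose a : ℝ) * (n - a).choose (n - m) = n.choose (n - m) * m.choose a := by
    exact_mod_cast choose_mul_choose_sub_sub a hmn
  have hna : (n.choose a : ℝ) ≠ 0 := by exact_mod_cast (Nat.choose_pos han).ne'
  have hnm : (n.choose (n - m) : ℝ) ≠ 0 := by exact_mod_cast (Nat.choose_pos (Nat.sub_le n m)).ne'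
  rw [← Nat.cast_sum, sum_choose_missed, card_draws]
  push_cast
  rw [div_eq_div_iff (pow_ne_zero _ hnm) (pow_ne_zero _ hna)]
  calc (n.choose a : ℝ) * (n - a).choose (n - m) ^ (t + 1) * n.choose a ^ t
      = ((n.choose a : ℝ) * (n - a).choose (n - m)) ^ (t + 1) := by ring
    _ = _ := by rw [hid]; ring

lemma eventually_le_of_tendsto_pow_div_pow {m : ℕ → ℕ} {t : ℕ} {μ : ℝ} (ht : t ≠ 0)
    (hμ : Tendsto (fun n => (m n : ℝ) ^ t / (n : ℝ) ^ (t - 1)) atTop (𝓝 μ)) :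
    ∀ᶠ n in atTop, m n ≤ n := by
  have h := hμ.div_atTop tendsto_natCast_atTop_atTop
  filter_upwards [h.eventually (gt_mem_nhds one_pos), eventually_ne_atTop 0] with n hlt hn
  have hpos : (0 : ℝ) < (n : ℝ) ^ t := by positivity
  rw [div_div, ← pow_succ, Nat.sub_add_cancel (Nat.one_le_iff_ne_zero.2 ht), div_lt_one hpos] at hlt
  exact_mod_cast (pow_le_pow_iff_left₀ (Nat.cast_nonneg _) (Nat.cast_nonneg _) ht).1 hlt.le

lemma tendsto_choose_pow_div_choose_pow {m : ℕ → ℕ} {t : ℕ} {μ : ℝ} (a : ℕ) (ht : t ≠ 0)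
    (hm : Tendsto m atTop atTop)
    (hμ : Tendsto (fun n => (m n : ℝ) ^ t / (n : ℝ) ^ (t - 1)) atTop (𝓝 μ)) :
    Tendsto (fun n => ((m n).choose a : ℝ) ^ t / (n.choose a : ℝ) ^ (t - 1)) atTop
      (𝓝 (μ ^ a / a !)) := by
  have hequiv : (fun n => ((m n).choose a : ℝ) ^ t / (n.choose a : ℝ) ^ (t - 1)) ~[atTop]
      fun n => ((m n : ℝ) ^ a / a !) ^ t / ((n : ℝ) ^ a / a !) ^ (t - 1) :=
    (((isEquivalent_choose a).comp_tendsto hm).pow t).div ((isEquivalent_choose a).pow (t - 1))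
  rw [hequiv.tendsto_nhds_iff]
  refine ((hμ.pow a).div_const (a ! : ℝ)).congr' ?_
  filter_upwards [eventually_ne_atTop 0] with n hn
  obtain ⟨t, rfl⟩ := Nat.exists_eq_add_one_of_ne_zero ht
  have : (n : ℝ) ≠ 0 := by exact_mod_cast hn
  have : (a ! : ℝ) ≠ 0 := by positivity
  simp only [Nat.add_sub_cancel, div_pow, ← pow_mul]
  field_simp
  ring

theorem tendsto_pr_missed_eq_poisson {m : ℕ → ℕ} {t : ℕ} {μ : ℝ} (ht : t ≠ 0)
    (hm : Tendsto m atTop atTop)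
    (hμ : Tendsto (fun n => (m n : ℝ) ^ t / (n : ℝ) ^ (t - 1)) atTop (𝓝 μ)) (k : ℕ) :
    Tendsto (fun n => pr n (n - m n) t (fun f => missed f = k)) atTop
      (𝓝 (Real.exp (-μ) * μ ^ k / k !)) := by
  have h := tendsto_card_filter_div_card_poisson (l := atTop)
    (fun n => draws n (n - m n) t) (fun _ => missed) k fun a =>
      (tendsto_choose_pow_div_choose_pow a ht hm hμ).congr' <| by
        filter_upwards [eventually_le_of_tendsto_pow_div_pow ht hμ, eventually_ge_atTop a]
          with n hmn han
        exact (sum_choose_missed_div_card_draws a ht hmn han).symm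
  simp only [pr]
  -- `pr` filters with the classical decidability instance
  convert h using 6

/-- Case III: with `s(n) = n − ⌈λ n^{(t−1)/t}⌉`, the number `X_t` of coupons missed after `t`
draws converges in distribution to `Po(λ^t)`. -/
theorem stmt12 (t : ℕ) (ht : 2 ≤ t) (lam : ℝ) (hlam : 0 < lam) :
    ∀ k : ℕ,
      Tendsto
        (fun n : ℕ =>
          pr n (n - ⌈lam * (n : ℝ) ^ (((t : ℝ) - 1) / (t : ℝ))⌉₊) t
            (fun f => missed f = k))
        atTop
        (nhds (Real.exp (-(lam ^ t)) * (lam ^ t) ^ k / (k.factorial : ℝ))) := by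
  intro k
  have hα : 0 < ((t : ℝ) - 1) / t := by
    have : (2 : ℝ) ≤ t := by exact_mod_cast ht
    exact div_pos (by linarith) (by linarith)
  have hrpow : Tendsto (fun n : ℕ => (n : ℝ) ^ (((t : ℝ) - 1) / t)) atTop atTop :=
    (tendsto_rpow_atTop hα).comp tendsto_natCast_atTop_atTop
  have hratio := ((tendsto_nat_ceil_mul_div_atTop hlam.le).comp hrpow).pow t
  refine tendsto_pr_missed_eq_poisson (by omega) (tendsto_nat_ceil_atTop.comp
    (hrpow.const_mul_atTop hlam)) (hratio.congr fun n => ?_) k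
  have hpow : ((n : ℝ) ^ (((t : ℝ) - 1) / t)) ^ t = (n : ℝ) ^ (t - 1) := by
    rw [← Real.rpow_natCast, ← Real.rpow_mul n.cast_nonneg, div_mul_cancel₀ _ (by positivity),
      ← Real.rpow_natCast, Nat.cast_sub (by omega), Nat.cast_one]
  rw [Function.comp_apply, div_pow, hpow]
  rfl
end

section
/- Let t ≥ 2, λ > 0, s(n) = n − ⌈λ n^{(t−1)/t}⌉, and Y_n the number of uniform s(n)-subset draws needed to collect all n coupons. Then Y_n converges in distribution to the random variable Z with P(Z = t) = e^{−λ^t} and P(Z = t+1) = 1 − e^{−λ^t}. -/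
open Finset Filter
open scoped Classical

/-!
Let `m = ⌈λ n^{(t-1)/t}⌉`, so that every draw misses exactly `m` coupons and a fixed set of `k`
coupons is missed by one draw with probability `r_k = ∏_{j<k} (m-j)/(n-j) ≤ (m/n)^k`. If `X` is
the number of coupons missed by `i` draws, then `E[C(X, k)] = C(n, k) r_k^i`; in particular
`E[X] = n (m/n)^i`, which tends to `∞` for `i < t` and to `0` for `i > t`. Hence `P(Y ≤ i) → 0`
for `i < t` by the second-moment method (`E[X²] ≤ E[X] + E[X]²`), and `P(Y ≤ i) → 1` for `i > t`
by Markov's inequality. For `i = t`, inclusion–exclusion gives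
`P(Y ≤ t) = ∑_k (-1)^k C(n, k) r_k^t`; the `k`-th term tends to `(-λ^t)^k / k!` and is dominated
by `(λ^t + 1)^k / k!`, so `P(Y ≤ t) → e^{-λ^t}` by dominated convergence.
-/

open Topology

namespace CouponCollector

section MomentMethod

variable {α : Type*} (D : Finset α) (X : α → ℕ)

theorem card_filter_ne_zero_le_sum : (#{x ∈ D | X x ≠ 0} : ℝ) ≤ ∑ x ∈ D, (X x : ℝ) :=
  calc (#{x ∈ D | X x ≠ 0} : ℝ) = ∑ x ∈ D with X x ≠ 0, (1 : ℝ) := by simp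
    _ ≤ ∑ x ∈ D with X x ≠ 0, (X x : ℝ) :=
        sum_le_sum fun x hx => by exact_mod_cast Nat.one_le_iff_ne_zero.2 (mem_filter.1 hx).2
    _ = ∑ x ∈ D, (X x : ℝ) := sum_filter_of_ne fun x _ hx => by exact_mod_cast hx

theorem sq_sum_le_card_filter_ne_zero_mul_sum_sq :
    (∑ x ∈ D, (X x : ℝ)) ^ 2 ≤ #{x ∈ D | X x ≠ 0} * ∑ x ∈ D, (X x : ℝ) ^ 2 := by
  have h := sum_mul_sq_le_sq_mul_sq {x ∈ D | X x ≠ 0} (fun _ => (1 : ℝ)) (fun x => (X x : ℝ))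
  simp only [one_mul, one_pow, sum_const, nsmul_one] at h
  rwa [sum_filter_of_ne fun x _ hx => by exact_mod_cast hx,
    sum_filter_of_ne fun x _ hx => by exact_mod_cast pow_ne_zero_iff two_ne_zero |>.1 hx] at h

theorem card_filter_eq_zero_mul_le {E : ℝ} (hE : 0 ≤ E)
    (h1 : ∑ x ∈ D, (X x : ℝ) = E * #D) (h2 : ∑ x ∈ D, (X x : ℝ) ^ 2 ≤ (E + E ^ 2) * #D) :
    #{x ∈ D | X x = 0} * (1 + E) ≤ #D := by
  have hsplit : (#{x ∈ D | X x = 0} : ℝ) + #{x ∈ D | X x ≠ 0} = #D := by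
    exact_mod_cast card_filter_add_card_filter_not _
  have hW : (0 : ℝ) ≤ #{x ∈ D | X x ≠ 0} := by positivity
  have hCS : (E * #D) * (E * #D) ≤ #{x ∈ D | X x ≠ 0} * (1 + E) * (E * #D) := by
    have := sq_sum_le_card_filter_ne_zero_mul_sum_sq D X
    rw [h1] at this
    nlinarith [mul_le_mul_of_nonneg_left h2 hW]
  have key : E * #D ≤ #{x ∈ D | X x ≠ 0} * (1 + E) := by
    rcases (mul_nonneg hE (Nat.cast_nonneg #D)).eq_or_lt with h0 | h0
    · rw [← h0]
      positivity
    · exact le_of_mul_le_mul_right hCS h0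
  linear_combination (1 + E) * hsplit + key

end MomentMethod

theorem natSub_div_natSub_le {n m : ℕ} (hm : m ≤ n) (j : ℕ) :
    ((m - j : ℕ) : ℝ) / (n - j : ℕ) ≤ m / n := by
  rcases Nat.eq_zero_or_pos (n - j) with hj | hj
  · rw [hj, Nat.cast_zero, div_zero]
    positivity
  rw [div_le_div_iff₀ (by exact_mod_cast hj) (by exact_mod_cast hj.trans_le (Nat.sub_le n j))]
  rcases le_or_gt j m with hjm | hjm
  · push_cast [hjm, hjm.trans hm]
    nlinarith [(Nat.cast_le (α := ℝ)).2 hm, (Nat.cast_le (α := ℝ)).2 hjm]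
  · simp only [Nat.sub_eq_zero_of_le hjm.le, Nat.cast_zero, zero_mul]
    positivity

theorem natSub_mul_div_natSub_le (n m j : ℕ) :
    ((n - j : ℕ) : ℝ) * (((m - j : ℕ) : ℝ) / (n - j : ℕ)) ≤ n * (m / n) := by
  rcases Nat.eq_zero_or_pos (n - j) with hj | hj
  · rw [hj, Nat.cast_zero, zero_mul]
    positivity
  rw [mul_div_cancel₀ _ (by exact_mod_cast hj.ne'),
    mul_div_cancel₀ _ (by exact_mod_cast (hj.trans_le (Nat.sub_le n j)).ne')]
  exact_mod_cast Nat.sub_le m j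

theorem tendsto_natSub_div {ι : Type*} {l : Filter ι} {u : ι → ℕ} {v : ι → ℝ} {a : ℝ}
    (hv : Tendsto v l atTop) (h : Tendsto (fun x => (u x : ℝ) / v x) l (𝓝 a)) (j : ℕ) :
    Tendsto (fun x => ((u x - j : ℕ) : ℝ) / v x) l (𝓝 a) := by
  have hlow : Tendsto (fun x => (u x : ℝ) / v x - j * (v x)⁻¹) l (𝓝 a) := by
    simpa using h.sub ((tendsto_inv_atTop_zero.comp hv).const_mul (j : ℝ))
  refine tendsto_of_tendsto_of_tendsto_of_le_of_le' hlow h ?_ ?_ <;>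
    filter_upwards [hv.eventually_gt_atTop 0] with x hx
  · rw [← div_eq_mul_inv, ← sub_div]
    gcongr
    exact sub_le_iff_le_add.2 (by exact_mod_cast le_tsub_add)
  · gcongr
    exact_mod_cast Nat.sub_le _ _

theorem rpow_sub_one_div_pow {x : ℝ} (hx : 0 ≤ x) {t : ℕ} (ht : 1 ≤ t) :
    (x ^ (((t : ℝ) - 1) / t)) ^ t = x ^ (t - 1) := by
  rw [← Real.rpow_natCast, ← Real.rpow_mul hx, div_mul_cancel₀ _ (by positivity),
    ← Real.rpow_natCast, Nat.cast_sub ht, Nat.cast_one]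

theorem tendsto_natCast_rpow_sub_one_div {t : ℕ} (ht : 2 ≤ t) :
    Tendsto (fun n : ℕ => (n : ℝ) ^ (((t : ℝ) - 1) / t)) atTop atTop := by
  have : (2 : ℝ) ≤ t := by exact_mod_cast ht
  exact (tendsto_rpow_atTop (div_pos (by linarith) (by linarith))).comp
    tendsto_natCast_atTop_atTop

section Counting

variable {n s i : ℕ}

def uncovered (f : Fin i → Finset (Fin n)) : Finset (Fin n) := {a | ∀ j, a ∉ f j}

theorem uncovered_eq_empty_iff (f : Fin i → Finset (Fin n)) :
    uncovered f = ∅ ↔ collected f := by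
  simp [uncovered, collected, Finset.eq_empty_iff_forall_notMem]

theorem missed_eq_zero_iff (f : Fin i → Finset (Fin n)) : missed f = 0 ↔ collected f :=
  card_eq_zero.trans (uncovered_eq_empty_iff f)

theorem card_filter_subset_uncovered (B : Finset (Fin n)) :
    #{f ∈ draws n s i | B ⊆ uncovered f} = ((n - #B).choose s) ^ i := by
  have h : {f ∈ draws n s i | B ⊆ uncovered f}
      = Fintype.piFinset fun _ : Fin i => Bᶜ.powersetCard s := by
    ext f
    simp only [draws, uncovered, mem_filter, mem_univ, true_and, Fintype.mem_piFinset,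
      mem_powersetCard, subset_iff, mem_compl]
    exact ⟨fun ⟨hs, hB⟩ j => ⟨fun a ha haB => hB haB j ha, hs j⟩,
      fun h => ⟨fun j => (h j).2, fun a haB j ha => (h j).1 ha haB⟩⟩
  rw [h, Fintype.card_piFinset, prod_const, card_univ, Fintype.card_fin, card_powersetCard,
    card_compl, Fintype.card_fin]

theorem card_draws : #(draws n s i) = (n.choose s) ^ i := by
  simpa using card_filter_subset_uncovered (n := n) (s := s) (i := i) ∅

theorem card_draws_pos (hs : s ≤ n) : (0 : ℝ) < #(draws n s i) := by
  rw [card_draws]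
  exact_mod_cast pow_pos (Nat.choose_pos hs) i

theorem sum_sum_subset_uncovered (𝒜 : Finset (Finset (Fin n))) (g : Finset (Fin n) → ℝ) :
    ∑ f ∈ draws n s i, ∑ B ∈ 𝒜 with B ⊆ uncovered f, g B
      = ∑ B ∈ 𝒜, g B * ((n - #B).choose s : ℝ) ^ i := by
  simp_rw [sum_filter]
  rw [sum_comm]
  refine sum_congr rfl fun B _ => ?_
  rw [← sum_filter, sum_const, card_filter_subset_uncovered, nsmul_eq_mul, mul_comm]
  push_cast
  rfl

theorem card_filter_collected :
    (#{f ∈ draws n s i | collected f} : ℝ)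
      = ∑ k ∈ range (n + 1), (-1) ^ k * (n.choose k : ℝ) * ((n - k).choose s : ℝ) ^ i := by
  have h (f : Fin i → Finset (Fin n)) : (if collected f then (1 : ℝ) else 0)
      = ∑ B ∈ univ.powerset with B ⊆ uncovered f, (-1) ^ #B := by
    have hU : {B ∈ (univ : Finset (Fin n)).powerset | B ⊆ uncovered f}
        = (uncovered f).powerset := by
      ext
      simp
    rw [← uncovered_eq_empty_iff, hU]
    exact_mod_cast sum_powerset_neg_one_pow_card.symm
  rw [← sum_boole, sum_congr rfl fun f _ => h f, sum_sum_subset_uncovered,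
    sum_powerset_apply_card (fun k => (-1) ^ k * ((n - k).choose s : ℝ) ^ i), card_univ,
    Fintype.card_fin]
  exact sum_congr rfl fun k _ => by ring

theorem sum_choose_missed (k : ℕ) :
    ∑ f ∈ draws n s i, ((missed f).choose k : ℝ) = n.choose k * ((n - k).choose s : ℝ) ^ i := by
  have h (f : Fin i → Finset (Fin n)) : ((missed f).choose k : ℝ)
      = ∑ B ∈ powersetCard k univ with B ⊆ uncovered f, 1 := by
    have hU : {B ∈ powersetCard k (univ : Finset (Fin n)) | B ⊆ uncovered f}
        = (uncovered f).powersetCard k := by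
      ext
      simp [and_comm]
    rw [sum_const, nsmul_one, hU, card_powersetCard]
    rfl
  rw [sum_congr rfl fun f _ => h f, sum_sum_subset_uncovered]
  simp only [one_mul]
  rw [sum_congr rfl fun B hB => by rw [(mem_powersetCard.1 hB).2], sum_const, card_powersetCard]
  simp

theorem sum_missed : ∑ f ∈ draws n s i, (missed f : ℝ) = n * ((n - 1).choose s : ℝ) ^ i := by
  simpa using sum_choose_missed (n := n) (s := s) (i := i) 1

theorem sum_missed_sq :
    ∑ f ∈ draws n s i, (missed f : ℝ) ^ 2
      = n * ((n - 1).choose s : ℝ) ^ i + n * (n - 1) * ((n - 2).choose s : ℝ) ^ i := by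
  have h (x : ℕ) : (x : ℝ) ^ 2 = x + 2 * (x.choose 2 : ℝ) := by
    rw [Nat.cast_choose_two]
    ring
  simp_rw [h, sum_add_distrib, ← mul_sum, sum_missed, sum_choose_missed, Nat.cast_choose_two]
  ring

end Counting

theorem pr_nonneg (n s i : ℕ) (p : (Fin i → Finset (Fin n)) → Prop) : 0 ≤ pr n s i p := by
  unfold pr
  positivity

theorem PYle_add_pr_not_collected {n s : ℕ} (i : ℕ) (hs : s ≤ n) :
    PYle n s i + pr n s i (fun f => ¬ collected f) = 1 := by
  rw [PYle, pr, pr, ← add_div, div_eq_one_iff_eq (card_draws_pos hs).ne']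
  convert congrArg (Nat.cast (R := ℝ)) (card_filter_add_card_filter_not (s := draws n s i)
    (fun f => collected f)) using 1
  push_cast
  congr

theorem PYle_eq_sum (n s i : ℕ) :
    PYle n s i = ∑ k ∈ range (n + 1),
      (-1) ^ k * (n.choose k : ℝ) * (((n - k).choose s : ℝ) / n.choose s) ^ i := by
  rw [PYle, pr, card_filter_collected, card_draws, sum_div]
  push_cast
  exact sum_congr rfl fun k _ => by rw [div_pow, mul_div_assoc]

noncomputable def missRatio (n m k : ℕ) : ℝ := ∏ j ∈ range k, ((m - j : ℕ) : ℝ) / (n - j : ℕ)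

noncomputable def missFactor (t n m j : ℕ) : ℝ :=
  (n - j : ℕ) * (((m - j : ℕ) : ℝ) / (n - j : ℕ)) ^ t

section MissRatio

variable {n m : ℕ}

theorem missRatio_nonneg (n m k : ℕ) : 0 ≤ missRatio n m k :=
  prod_nonneg fun _ _ => by positivity

theorem missRatio_le_pow (hm : m ≤ n) (k : ℕ) : missRatio n m k ≤ ((m : ℝ) / n) ^ k := by
  calc missRatio n m k ≤ ∏ _j ∈ range k, ((m : ℝ) / n) :=
        prod_le_prod (fun _ _ => by positivity) fun j _ => natSub_div_natSub_le hm j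
    _ = ((m : ℝ) / n) ^ k := by rw [prod_const, card_range]

theorem choose_sub_div_choose (hm : m ≤ n) {k : ℕ} (hk : k ≤ n) :
    ((n - k).choose (n - m) : ℝ) / n.choose (n - m) = missRatio n m k := by
  have hnat : (n - k).choose (n - m) * n.choose k = n.choose (n - m) * m.choose k := by
    rcases le_or_gt k m with hkm | hkm
    · have : (n - k).choose (n - m) = (n - k).choose (m - k) := by
        rw [← Nat.choose_symm (by omega : m - k ≤ n - k)]
        congr 1
        omega
      rw [this, Nat.choose_symm hm, Nat.choose_mul hkm]
      ring
    · rw [Nat.choose_eq_zero_of_lt (by omega : n - k < n - m), Nat.choose_eq_zero_of_lt hkm]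
      simp
  have hdesc (a : ℕ) : (a.choose k : ℝ) = (∏ j ∈ range k, ((a - j : ℕ) : ℝ)) / k.factorial := by
    rw [eq_div_iff (by positivity), ← Nat.cast_prod, ← Nat.descFactorial_eq_prod_range,
      Nat.descFactorial_eq_factorial_mul_choose]
    push_cast
    ring
  have hn : (0 : ℝ) < n.choose k := by exact_mod_cast Nat.choose_pos hk
  have hs : (0 : ℝ) < n.choose (n - m) := by exact_mod_cast Nat.choose_pos (Nat.sub_le n m)
  calc ((n - k).choose (n - m) : ℝ) / n.choose (n - m) = (m.choose k : ℝ) / n.choose k := by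
        rw [div_eq_div_iff hs.ne' hn.ne', mul_comm (m.choose k : ℝ)]
        exact_mod_cast hnat
    _ = missRatio n m k := by
        rw [hdesc, hdesc, div_div_div_cancel_right₀ (by positivity), missRatio, prod_div_distrib]

theorem choose_sub_pow_eq_missRatio_pow_mul (hm : m ≤ n) {k : ℕ} (hk : k ≤ n) (i : ℕ) :
    ((n - k).choose (n - m) : ℝ) ^ i = missRatio n m k ^ i * (n.choose (n - m) : ℝ) ^ i := by
  rw [← choose_sub_div_choose hm hk, ← mul_pow, div_mul_cancel₀]
  exact_mod_cast (Nat.choose_pos (Nat.sub_le n m)).ne'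

theorem choose_mul_missRatio_pow (t n m k : ℕ) :
    (n.choose k : ℝ) * missRatio n m k ^ t
      = (∏ j ∈ range k, missFactor t n m j) / k.factorial := by
  unfold missRatio missFactor
  rw [eq_div_iff (by positivity), mul_right_comm, ← prod_pow, prod_mul_distrib, ← Nat.cast_prod,
    ← Nat.descFactorial_eq_prod_range, Nat.descFactorial_eq_factorial_mul_choose]
  push_cast
  ring

theorem missFactor_nonneg (t n m j : ℕ) : 0 ≤ missFactor t n m j := by
  unfold missFactor
  positivity

theorem missFactor_le_missFactor_zero (hm : m ≤ n) {t : ℕ} (ht : 1 ≤ t) (j : ℕ) :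
    missFactor t n m j ≤ missFactor t n m 0 := by
  obtain ⟨t, rfl⟩ := Nat.exists_eq_add_of_le' ht
  simp only [missFactor, Nat.sub_zero]
  set r := ((m - j : ℕ) : ℝ) / (n - j : ℕ)
  calc ((n - j : ℕ) : ℝ) * r ^ (t + 1) = r ^ t * ((n - j : ℕ) * r) := by ring
    _ ≤ ((m : ℝ) / n) ^ t * (n * (m / n)) :=
        mul_le_mul (pow_le_pow_left₀ (by positivity) (natSub_div_natSub_le hm j) t)
          (natSub_mul_div_natSub_le n m j) (by positivity) (by positivity)
    _ = n * ((m : ℝ) / n) ^ (t + 1) := by ring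

theorem missFactor_eq {t n m j : ℕ} (ht : 1 ≤ t) (hj : j < n) :
    missFactor t n m j = (((m - j : ℕ) : ℝ) / (n : ℝ) ^ (((t : ℝ) - 1) / t)) ^ t
      / (((n - j : ℕ) : ℝ) / n) ^ (t - 1) := by
  have hn : (n : ℝ) ≠ 0 := by exact_mod_cast (hj.trans_le' (Nat.zero_le j)).ne'
  have hnj : ((n - j : ℕ) : ℝ) ≠ 0 := by exact_mod_cast (Nat.sub_pos_of_lt hj).ne'
  rw [missFactor, div_pow _ ((n : ℝ) ^ _), rpow_sub_one_div_pow (Nat.cast_nonneg n) ht]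
  obtain ⟨t, rfl⟩ := Nat.exists_eq_add_of_le' ht
  rw [Nat.add_sub_cancel, div_pow, div_pow]
  field_simp
  ring

theorem PYle_sub_eq_tsum (hm : m ≤ n) (t : ℕ) :
    PYle n (n - m) t
      = ∑' k, (-1) ^ k / k.factorial * ∏ j ∈ range k, missFactor t n m j := by
  rw [tsum_eq_sum (s := range (n + 1)) fun k hk => ?_, PYle_eq_sum]
  · refine sum_congr rfl fun k hk => ?_
    rw [choose_sub_div_choose hm (Nat.lt_succ_iff.1 (mem_range.1 hk)), mul_assoc,
      choose_mul_missRatio_pow]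
    ring
  · rw [← mul_div_right_comm, mul_div_assoc, ← choose_mul_missRatio_pow,
      Nat.choose_eq_zero_of_lt (by simpa using hk)]
    simp

end MissRatio

section Moments

variable {n m : ℕ}

theorem sum_missed_eq (hm : m ≤ n) (hn : 1 ≤ n) (i : ℕ) :
    ∑ f ∈ draws n (n - m) i, (missed f : ℝ) = n * ((m : ℝ) / n) ^ i * #(draws n (n - m) i) := by
  rw [sum_missed, choose_sub_pow_eq_missRatio_pow_mul hm hn, card_draws]
  simp [missRatio, mul_assoc]

theorem sum_missed_sq_le (hm : m ≤ n) (hn : 2 ≤ n) (i : ℕ) :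
    ∑ f ∈ draws n (n - m) i, (missed f : ℝ) ^ 2
      ≤ (n * ((m : ℝ) / n) ^ i + (n * ((m : ℝ) / n) ^ i) ^ 2) * #(draws n (n - m) i) := by
  rw [sum_missed_sq, choose_sub_pow_eq_missRatio_pow_mul hm (by omega : 1 ≤ n),
    choose_sub_pow_eq_missRatio_pow_mul hm hn, card_draws,
    show missRatio n m 1 = m / n by simp [missRatio]]
  have h2 : (n : ℝ) * (n - 1) * missRatio n m 2 ^ i ≤ (n * ((m : ℝ) / n) ^ i) ^ 2 := by
    calc (n : ℝ) * (n - 1) * missRatio n m 2 ^ i ≤ n * n * (((m : ℝ) / n) ^ 2) ^ i := by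
          gcongr
          · exact pow_nonneg (missRatio_nonneg n m 2) i
          · linarith
          · exact missRatio_nonneg n m 2
          · exact missRatio_le_pow hm 2
      _ = (n * ((m : ℝ) / n) ^ i) ^ 2 := by ring
  have hN : (0 : ℝ) ≤ (n.choose (n - m) : ℝ) ^ i := by positivity
  push_cast
  nlinarith [mul_le_mul_of_nonneg_right h2 hN]

theorem pr_not_collected_le (hm : m ≤ n) (hn : 1 ≤ n) (i : ℕ) :
    pr n (n - m) i (fun f => ¬ collected f) ≤ n * ((m : ℝ) / n) ^ i := by
  rw [pr, div_le_iff₀ (card_draws_pos (Nat.sub_le n m)), ← sum_missed_eq hm hn]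
  calc _ = (#{f ∈ draws n (n - m) i | missed f ≠ 0} : ℝ) := by
        congr 2
        ext f
        simp [missed_eq_zero_iff]
    _ ≤ _ := card_filter_ne_zero_le_sum _ _

theorem PYle_le_one_div (hm : m ≤ n) (hn : 2 ≤ n) (i : ℕ) :
    PYle n (n - m) i ≤ 1 / (1 + n * ((m : ℝ) / n) ^ i) := by
  have h := card_filter_eq_zero_mul_le _ _ (by positivity) (sum_missed_eq hm (by omega) i)
    (sum_missed_sq_le hm hn i)
  rw [PYle, pr, div_le_div_iff₀ (card_draws_pos (Nat.sub_le n m)) (by positivity), one_mul]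
  calc _ = (#{f ∈ draws n (n - m) i | missed f = 0} : ℝ) * (1 + n * ((m : ℝ) / n) ^ i) := by
        congr 3
        ext f
        simp [missed_eq_zero_iff]
    _ ≤ _ := h

end Moments

theorem tendsto_PYeq_of_tendsto_PYle {s : ℕ → ℕ} {L : ℕ → ℝ}
    (h : ∀ j, Tendsto (fun n => PYle n (s n) j) atTop (𝓝 (L j))) (i : ℕ) :
    Tendsto (fun n => PYeq n (s n) i) atTop (𝓝 (L i - if i = 0 then 0 else L (i - 1))) := by
  unfold PYeq
  split_ifs
  · simpa using h i
  · exact (h i).sub (h (i - 1))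

section Asymptotics

variable {t : ℕ} {lam : ℝ} {m : ℕ → ℕ}
  (hm : Tendsto (fun n : ℕ => (m n : ℝ) / (n : ℝ) ^ (((t : ℝ) - 1) / t)) atTop (𝓝 lam))
include hm

theorem tendsto_missFactor (ht : 2 ≤ t) (j : ℕ) :
    Tendsto (fun n => missFactor t n (m n) j) atTop (𝓝 (lam ^ t)) := by
  have hn : Tendsto (fun n : ℕ => (n : ℝ) / n) atTop (𝓝 1) :=
    tendsto_const_nhds.congr' <| (eventually_gt_atTop 0).mono fun n hn =>
      (div_self (by exact_mod_cast hn.ne')).symm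
  have h := ((tendsto_natSub_div (tendsto_natCast_rpow_sub_one_div ht) hm j).pow t).div
    ((tendsto_natSub_div tendsto_natCast_atTop_atTop hn j).pow (t - 1)) (by simp)
  rw [one_pow, div_one] at h
  exact h.congr' <| (eventually_gt_atTop j).mono fun n hn => (missFactor_eq (by omega) hn).symm

theorem tendsto_div_natCast_zero (ht : 1 ≤ t) :
    Tendsto (fun n => (m n : ℝ) / n) atTop (𝓝 0) := by
  have hexp : ((t : ℝ) - 1) / t - 1 = -(1 / t) := by
    field_simp
    ring
  have h := hm.mul ((tendsto_rpow_neg_atTop (by positivity : (0 : ℝ) < 1 / t)).comp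
    tendsto_natCast_atTop_atTop)
  rw [mul_zero] at h
  refine h.congr' <| (eventually_gt_atTop 0).mono fun n hn => ?_
  have hn : (n : ℝ) ≠ 0 := by exact_mod_cast hn.ne'
  simp only [Function.comp_apply, ← hexp, Real.rpow_sub_one hn]
  field_simp

theorem eventually_pos (hlam : 0 < lam) : ∀ᶠ n in atTop, 0 < m n :=
  (hm.eventually_const_lt hlam).mono fun n hn =>
    Nat.pos_of_ne_zero fun h => by simp [h] at hn

theorem eventually_le_self (ht : 1 ≤ t) : ∀ᶠ n in atTop, m n ≤ n := by
  filter_upwards [(tendsto_div_natCast_zero hm ht).eventually_lt_const one_pos,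
    eventually_gt_atTop 0] with n h hn
  rw [div_lt_one (by exact_mod_cast hn)] at h
  exact_mod_cast h.le

theorem tendsto_mul_div_pow_atTop (ht : 2 ≤ t) (hlam : 0 < lam) {i : ℕ} (hi : i < t) :
    Tendsto (fun n : ℕ => (n : ℝ) * ((m n : ℝ) / n) ^ i) atTop atTop := by
  have hpos : ∀ᶠ n in atTop, 0 < (m n : ℝ) / n := by
    filter_upwards [eventually_pos hm hlam, eventually_gt_atTop 0] with n h hn
    positivity
  have hinv := (tendsto_nhdsWithin_iff.2
    ⟨tendsto_div_natCast_zero hm (by omega), hpos⟩).inv_tendsto_nhdsGT_zero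
  have h := (tendsto_missFactor hm ht 0).pos_mul_atTop (pow_pos hlam t)
    ((tendsto_pow_atTop (Nat.sub_ne_zero_of_lt hi)).comp hinv)
  refine h.congr' <| hpos.mono fun n hn => ?_
  obtain ⟨d, rfl⟩ := Nat.exists_eq_add_of_le hi.le
  simp only [missFactor, Nat.sub_zero, Function.comp_apply, Pi.inv_apply]
  rw [Nat.add_sub_cancel_left, pow_add, mul_assoc, mul_assoc, ← mul_pow, mul_inv_cancel₀ hn.ne',
    one_pow, mul_one]

theorem tendsto_mul_div_pow_zero (ht : 2 ≤ t) {i : ℕ} (hi : t < i) :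
    Tendsto (fun n : ℕ => (n : ℝ) * ((m n : ℝ) / n) ^ i) atTop (𝓝 0) := by
  have h := (tendsto_missFactor hm ht 0).mul
    ((tendsto_div_natCast_zero hm (by omega)).pow (i - t))
  rw [zero_pow (Nat.sub_ne_zero_of_lt hi), mul_zero] at h
  refine h.congr fun n => ?_
  simp only [missFactor, Nat.sub_zero]
  rw [mul_assoc, ← pow_add, Nat.add_sub_cancel' hi.le]

theorem tendsto_PYle_of_lt (ht : 2 ≤ t) (hlam : 0 < lam) {i : ℕ} (hi : i < t) :
    Tendsto (fun n => PYle n (n - m n) i) atTop (𝓝 0) := by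
  have hup : Tendsto (fun n : ℕ => 1 / (1 + n * ((m n : ℝ) / n) ^ i)) atTop (𝓝 0) := by
    simpa [Function.comp_def] using tendsto_inv_atTop_zero.comp
      (tendsto_atTop_add_const_left _ 1 (tendsto_mul_div_pow_atTop hm ht hlam hi))
  refine tendsto_of_tendsto_of_tendsto_of_le_of_le' tendsto_const_nhds hup
    (Eventually.of_forall fun n => pr_nonneg _ _ _ _) ?_
  filter_upwards [eventually_le_self hm (by omega), eventually_ge_atTop 2] with n hmn hn
  exact PYle_le_one_div hmn hn i

theorem tendsto_PYle_of_gt (ht : 2 ≤ t) {i : ℕ} (hi : t < i) :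
    Tendsto (fun n => PYle n (n - m n) i) atTop (𝓝 1) := by
  have h0 : Tendsto (fun n => pr n (n - m n) i (fun f => ¬ collected f)) atTop (𝓝 0) := by
    refine tendsto_of_tendsto_of_tendsto_of_le_of_le' tendsto_const_nhds
      (tendsto_mul_div_pow_zero hm ht hi) (Eventually.of_forall fun n => pr_nonneg _ _ _ _) ?_
    filter_upwards [eventually_le_self hm (by omega), eventually_ge_atTop 1] with n hmn hn
    exact pr_not_collected_le hmn hn i
  simpa using (tendsto_const_nhds (x := (1 : ℝ))).sub h0 |>.congr fun n =>
    (eq_sub_of_add_eq (PYle_add_pr_not_collected i (Nat.sub_le n (m n)))).symm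

theorem tendsto_PYle_self (ht : 2 ≤ t) :
    Tendsto (fun n => PYle n (n - m n) t) atTop (𝓝 (Real.exp (-(lam ^ t)))) := by
  have hlim (k : ℕ) : Tendsto (fun n => (-1) ^ k / k.factorial * ∏ j ∈ range k,
      missFactor t n (m n) j) atTop (𝓝 ((-(lam ^ t)) ^ k / k.factorial)) := by
    have h := (tendsto_finsetProd (range k) fun j _ => tendsto_missFactor hm ht j).const_mul
      ((-1) ^ k / (k.factorial : ℝ))
    rwa [prod_const, card_range, ← mul_div_right_comm, ← neg_pow] at h
  have hbound : ∀ᶠ n in atTop, ∀ k, ‖(-1) ^ k / k.factorial * ∏ j ∈ range k,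
      missFactor t n (m n) j‖ ≤ (lam ^ t + 1) ^ k / k.factorial := by
    filter_upwards [eventually_le_self hm (by omega),
      (tendsto_missFactor hm ht 0).eventually_le_const (lt_add_one _)] with n hmn hρ k
    rw [norm_mul, norm_div, norm_pow, norm_neg, norm_one, one_pow, RCLike.norm_natCast,
      Real.norm_of_nonneg (prod_nonneg fun j _ => missFactor_nonneg t n (m n) j),
      ← mul_div_right_comm, one_mul]
    gcongr
    calc ∏ j ∈ range k, missFactor t n (m n) j ≤ ∏ _j ∈ range k, (lam ^ t + 1) :=
          prod_le_prod (fun j _ => missFactor_nonneg t n (m n) j) fun j _ =>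
            (missFactor_le_missFactor_zero hmn (by omega) j).trans hρ
      _ = (lam ^ t + 1) ^ k := by rw [prod_const, card_range]
  have hexp : ∑' k : ℕ, (-(lam ^ t)) ^ k / k.factorial = Real.exp (-(lam ^ t)) := by
    rw [Real.exp_eq_exp_ℝ, NormedSpace.exp_eq_tsum_div]
  rw [← hexp]
  refine (tendsto_tsum_of_dominated_convergence (Real.summable_pow_div_factorial _) hlim
    hbound).congr' ?_
  filter_upwards [eventually_le_self hm (by omega)] with n hmn
  exact (PYle_sub_eq_tsum hmn t).symm

theorem tendsto_PYeq (ht : 2 ≤ t) (hlam : 0 < lam) (i : ℕ) :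
    Tendsto (fun n => PYeq n (n - m n) i) atTop
      (𝓝 (if i = t then Real.exp (-(lam ^ t))
        else if i = t + 1 then 1 - Real.exp (-(lam ^ t)) else 0)) := by
  have hPYle (j : ℕ) : Tendsto (fun n => PYle n (n - m n) j) atTop
      (𝓝 (if j < t then 0 else if j = t then Real.exp (-(lam ^ t)) else 1)) := by
    rcases lt_trichotomy j t with h | rfl | h
    · simpa [h] using tendsto_PYle_of_lt hm ht hlam h
    · simpa using tendsto_PYle_self hm ht
    · simpa [h.not_gt, h.ne'] using tendsto_PYle_of_gt hm ht h
  convert tendsto_PYeq_of_tendsto_PYle hPYle i using 2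
  split_ifs <;> first | omega | ring

end Asymptotics

end CouponCollector

open CouponCollector

/-- Case III: with `s(n) = n − ⌈λ n^{(t−1)/t}⌉`, the collection time `Y_n` converges in
distribution to `Z` with `P(Z = t) = e^{−λ^t}`, `P(Z = t+1) = 1 − e^{−λ^t}`. -/
theorem stmt14 (t : ℕ) (ht : 2 ≤ t) (lam : ℝ) (hlam : 0 < lam) :
    ∀ i : ℕ,
      Tendsto
        (fun n : ℕ => PYeq n (n - ⌈lam * (n : ℝ) ^ (((t : ℝ) - 1) / (t : ℝ))⌉₊) i)
        atTop
        (nhds (if i = t then Real.exp (-(lam ^ t))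
               else if i = t + 1 then 1 - Real.exp (-(lam ^ t)) else 0)) :=
  tendsto_PYeq ((tendsto_nat_ceil_mul_div_atTop hlam.le).comp
    (tendsto_natCast_rpow_sub_one_div ht)) ht hlam
end
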